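/- (Compressible Beltrami flows.) Let ρ > 0, μ and u = (u₁,u₂,u₃) be smooth (C^∞) functions on an open set U ⊆ ℝ³ such that the continuity equation ∂₁(ρu₁) + ∂₂(ρu₂) + ∂₃(ρu₃) = 0 holds and the vorticity is parallel to the velocity in the sense that curl u = μ u on U. Then μ/ρ is conserved along streamlines: u₁∂₁(μ/ρ) + u₂∂₂(μ/ρ) + u₃∂₃(μ/ρ) = 0 on U. -/

import Mathlib

/-- Partial derivative in direction `i` of a scalar function on `ℝ³`. -/
noncomputable def pd (i : Fin 3) (f : (Fin 3 → ℝ) → ℝ) (x : Fin 3 → ℝ) : ℝ :=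
  fderiv ℝ f x (Pi.single i 1)

/-- The curl of a vector field on `ℝ³`. -/
noncomputable def curl (u : Fin 3 → (Fin 3 → ℝ) → ℝ) : Fin 3 → (Fin 3 → ℝ) → ℝ :=
  ![fun x => pd 1 (u 2) x - pd 2 (u 1) x,
    fun x => pd 2 (u 0) x - pd 0 (u 2) x,
    fun x => pd 0 (u 1) x - pd 1 (u 0) x]

private lemma pd_congr {f g : (Fin 3 → ℝ) → ℝ} {x : Fin 3 → ℝ}
    (h : f =ᶠ[nhds x] g) (i : Fin 3) : pd i f x = pd i g x := by
  unfold pd; rw [h.fderiv_eq]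

private lemma pd_mul {f g : (Fin 3 → ℝ) → ℝ} {x : Fin 3 → ℝ}
    (hf : DifferentiableAt ℝ f x) (hg : DifferentiableAt ℝ g x) (i : Fin 3) :
    pd i (fun y => f y * g y) x = pd i f x * g x + f x * pd i g x := by
  unfold pd; rw [fderiv_fun_mul hf hg]; simp; ring

private lemma pd_sub {f g : (Fin 3 → ℝ) → ℝ} {x : Fin 3 → ℝ}
    (hf : DifferentiableAt ℝ f x) (hg : DifferentiableAt ℝ g x) (i : Fin 3) :
    pd i (fun y => f y - g y) x = pd i f x - pd i g x := by
  unfold pd; rw [fderiv_fun_sub hf hg]; simp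

private lemma pd_diffAt {f : (Fin 3 → ℝ) → ℝ} {x : Fin 3 → ℝ}
    (hf : ContDiffAt ℝ (⊤ : ℕ∞) f x) (l : Fin 3) : DifferentiableAt ℝ (pd l f) x := by
  have hd : DifferentiableAt ℝ (fderiv ℝ f) x :=
    (hf.fderiv_right (m := 1) (WithTop.coe_le_coe.mpr le_top)).differentiableAt one_ne_zero
  exact hd.clm_apply (differentiableAt_const _)

private lemma pd_pd {f : (Fin 3 → ℝ) → ℝ} {x : Fin 3 → ℝ}
    (hf : ContDiffAt ℝ (⊤ : ℕ∞) f x) (k l : Fin 3) :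
    pd k (pd l f) x = fderiv ℝ (fderiv ℝ f) x (Pi.single k 1) (Pi.single l 1) := by
  have hd : DifferentiableAt ℝ (fderiv ℝ f) x :=
    (hf.fderiv_right (m := 1) (WithTop.coe_le_coe.mpr le_top)).differentiableAt one_ne_zero
  have h1 : pd l f = fun y => (fderiv ℝ f y) (Pi.single l 1) := rfl
  rw [pd, h1, fderiv_clm_apply hd (differentiableAt_const _)]
  simp

private lemma pd_pd_symm {f : (Fin 3 → ℝ) → ℝ} {x : Fin 3 → ℝ}
    (hf : ContDiffAt ℝ (⊤ : ℕ∞) f x) (k l : Fin 3) :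
    pd k (pd l f) x = pd l (pd k f) x := by
  rw [pd_pd hf, pd_pd hf]
  exact (hf.isSymmSndFDerivAt (by rw [minSmoothness_of_isRCLikeNormedField]; exact WithTop.coe_le_coe.mpr le_top)) _ _

/-- compressible Beltrami flows: if the continuity equation holds and
`curl u = μ u`, then `μ/ρ` is conserved along streamlines. -/
theorem beltrami_mu_over_rho_conserved
    (U : Set (Fin 3 → ℝ)) (hU : IsOpen U)
    (ρ μ : (Fin 3 → ℝ) → ℝ) (u : Fin 3 → (Fin 3 → ℝ) → ℝ)
    (hρ : ContDiffOn ℝ (⊤ : ℕ∞) ρ U) (hμ : ContDiffOn ℝ (⊤ : ℕ∞) μ U)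
    (hu : ∀ i, ContDiffOn ℝ (⊤ : ℕ∞) (u i) U)
    (hρpos : ∀ x ∈ U, 0 < ρ x)
    (hmass : ∀ x ∈ U,
      pd 0 (fun y => ρ y * u 0 y) x + pd 1 (fun y => ρ y * u 1 y) x
        + pd 2 (fun y => ρ y * u 2 y) x = 0)
    (hbeltrami : ∀ i : Fin 3, ∀ x ∈ U, curl u i x = μ x * u i x) :
    ∀ x ∈ U,
      u 0 x * pd 0 (fun y => μ y / ρ y) x + u 1 x * pd 1 (fun y => μ y / ρ y) x
        + u 2 x * pd 2 (fun y => μ y / ρ y) x = 0 := by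
  intro x hx
  have hmem : U ∈ nhds x := hU.mem_nhds hx
  have hρa : ContDiffAt ℝ (⊤ : ℕ∞) ρ x := hρ.contDiffAt hmem
  have hμa : ContDiffAt ℝ (⊤ : ℕ∞) μ x := hμ.contDiffAt hmem
  have hua : ∀ i, ContDiffAt ℝ (⊤ : ℕ∞) (u i) x := fun i => (hu i).contDiffAt hmem
  have hρd : DifferentiableAt ℝ ρ x := hρa.differentiableAt (by simp)
  have hμd : DifferentiableAt ℝ μ x := hμa.differentiableAt (by simp)
  have hud : ∀ i, DifferentiableAt ℝ (u i) x := fun i => (hua i).differentiableAt (by simp)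
  have hrne : ρ x ≠ 0 := (hρpos x hx).ne'
  -- curl components
  have hc0 : curl u 0 = fun y => pd 1 (u 2) y - pd 2 (u 1) y := rfl
  have hc1 : curl u 1 = fun y => pd 2 (u 0) y - pd 0 (u 2) y := rfl
  have hc2 : curl u 2 = fun y => pd 0 (u 1) y - pd 1 (u 0) y := rfl
  -- divergence of curl vanishes
  have hdiv : pd 0 (curl u 0) x + pd 1 (curl u 1) x + pd 2 (curl u 2) x = 0 := by
    rw [hc0, hc1, hc2,
      pd_sub (pd_diffAt (hua 2) 1) (pd_diffAt (hua 1) 2),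
      pd_sub (pd_diffAt (hua 0) 2) (pd_diffAt (hua 2) 0),
      pd_sub (pd_diffAt (hua 1) 0) (pd_diffAt (hua 0) 1),
      pd_pd_symm (hua 2) 0 1, pd_pd_symm (hua 1) 0 2, pd_pd_symm (hua 0) 1 2]
    ring
  -- rewrite curl via Beltrami condition
  have hbe : ∀ i : Fin 3, pd i (curl u i) x = pd i μ x * u i x + μ x * pd i (u i) x := by
    intro i
    have heq : curl u i =ᶠ[nhds x] fun y => μ y * u i y :=
      Filter.eventually_of_mem hmem (hbeltrami i)
    rw [pd_congr heq i, pd_mul hμd (hud i) i]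
  -- continuity equation expanded
  have hms : ∀ i : Fin 3, pd i (fun y => ρ y * u i y) x
      = pd i ρ x * u i x + ρ x * pd i (u i) x := fun i => pd_mul hρd (hud i) i
  have E1 : (pd 0 μ x * u 0 x + μ x * pd 0 (u 0) x)
      + (pd 1 μ x * u 1 x + μ x * pd 1 (u 1) x)
      + (pd 2 μ x * u 2 x + μ x * pd 2 (u 2) x) = 0 := by
    rw [← hbe 0, ← hbe 1, ← hbe 2]; exact hdiv
  have E2 : (pd 0 ρ x * u 0 x + ρ x * pd 0 (u 0) x)
      + (pd 1 ρ x * u 1 x + ρ x * pd 1 (u 1) x)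
      + (pd 2 ρ x * u 2 x + ρ x * pd 2 (u 2) x) = 0 := by
    rw [← hms 0, ← hms 1, ← hms 2]; exact hmass x hx
  -- derivative of the quotient
  have hgd : DifferentiableAt ℝ (fun y => μ y / ρ y) x := by
    have : (fun y => μ y / ρ y) = fun y => μ y * (ρ y)⁻¹ := by
      funext y; rw [div_eq_mul_inv]
    rw [this]; exact hμd.mul (hρd.inv hrne)
  have hμeq : μ =ᶠ[nhds x] fun y => (μ y / ρ y) * ρ y := by
    refine Filter.eventually_of_mem hmem (fun y hy => ?_)
    exact (div_mul_cancel₀ _ (hρpos y hy).ne').symm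
  have E3 : ∀ i : Fin 3, pd i μ x
      = pd i (fun y => μ y / ρ y) x * ρ x + (μ x / ρ x) * pd i ρ x := by
    intro i
    rw [pd_congr hμeq i, pd_mul hgd hρd i]
  have e30 := E3 0; have e31 := E3 1; have e32 := E3 2
  have hμx : μ x / ρ x * ρ x = μ x := div_mul_cancel₀ _ hrne
  -- final algebra
  have goal' : ρ x * (u 0 x * pd 0 (fun y => μ y / ρ y) x
      + u 1 x * pd 1 (fun y => μ y / ρ y) x
      + u 2 x * pd 2 (fun y => μ y / ρ y) x) = 0 := by
    have : ρ x * (u 0 x * pd 0 (fun y => μ y / ρ y) x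
        + u 1 x * pd 1 (fun y => μ y / ρ y) x
        + u 2 x * pd 2 (fun y => μ y / ρ y) x)
        = (pd 0 μ x * u 0 x + pd 1 μ x * u 1 x + pd 2 μ x * u 2 x)
          - (μ x / ρ x) * (pd 0 ρ x * u 0 x + pd 1 ρ x * u 1 x + pd 2 ρ x * u 2 x) := by
      rw [e30, e31, e32]; ring
    rw [this]
    have h1 : pd 0 μ x * u 0 x + pd 1 μ x * u 1 x + pd 2 μ x * u 2 x
        = -(μ x * (pd 0 (u 0) x + pd 1 (u 1) x + pd 2 (u 2) x)) := by linarith [E1]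
    have h2 : pd 0 ρ x * u 0 x + pd 1 ρ x * u 1 x + pd 2 ρ x * u 2 x
        = -(ρ x * (pd 0 (u 0) x + pd 1 (u 1) x + pd 2 (u 2) x)) := by linarith [E2]
    rw [h1, h2]
    field_simp
    ring
  have := mul_eq_zero.mp goal'
  tauto
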